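/- If Φ is trace-preserving, unital, and J(Φ) is Hermitian with ‖J(Φ) − (1/d)1‖_∞ ≤ 1/(d(d²−1)), then Ψ = (d²−1)Φ − (d²−2)Ω is doubly stochastic, i.e. completely positive, trace-preserving, and unital. -/

import Mathlib

open Matrix MeasureTheory
open scoped Kronecker ComplexOrder

/-- vec(A): vec(|i⟩⟨j|) = |i⟩ ⊗ |j⟩. -/
def vec {d : ℕ} (A : Matrix (Fin d) (Fin d) ℂ) : Fin d × Fin d → ℂ := fun p => A p.1 p.2

/-- The rank-one operator vec(A) vec(A)*. -/
noncomputable def outer {d : ℕ} (A : Matrix (Fin d) (Fin d) ℂ) :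
    Matrix (Fin d × Fin d) (Fin d × Fin d) ℂ :=
  vecMulVec (_root_.vec A) (star (_root_.vec A))

/-- Choi–Jamiołkowski representation J(Φ) = Σ_{i,j} Φ(|i⟩⟨j|) ⊗ |i⟩⟨j|. -/
noncomputable def choi {d : ℕ} (Φ : Matrix (Fin d) (Fin d) ℂ → Matrix (Fin d) (Fin d) ℂ) :
    Matrix (Fin d × Fin d) (Fin d × Fin d) ℂ :=
  ∑ i, ∑ j, (Φ (single i j 1)) ⊗ₖ (single i j 1)

/-- Partial trace over the first (Y) tensor factor. -/
noncomputable def ptraceLeft {d : ℕ} (M : Matrix (Fin d × Fin d) (Fin d × Fin d) ℂ) :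
    Matrix (Fin d) (Fin d) ℂ :=
  Matrix.of fun i j => ∑ k, M (k, i) (k, j)

/-- Partial trace over the second (X) tensor factor. -/
noncomputable def ptraceRight {d : ℕ} (M : Matrix (Fin d × Fin d) (Fin d × Fin d) ℂ) :
    Matrix (Fin d) (Fin d) ℂ :=
  Matrix.of fun i j => ∑ k, M (i, k) (j, k)

/-- The swap operator W on Y ⊗ X. -/
def swapOp (d : ℕ) : Matrix (Fin d × Fin d) (Fin d × Fin d) ℂ :=
  Matrix.of fun p q => if p.1 = q.2 ∧ p.2 = q.1 then 1 else 0

/-- Antisymmetric projection R = (1 - W)/2. -/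
noncomputable def projR (d : ℕ) : Matrix (Fin d × Fin d) (Fin d × Fin d) ℂ :=
  (2 : ℂ)⁻¹ • (1 - swapOp d)

/-- Symmetric projection S = (1 + W)/2. -/
noncomputable def projS (d : ℕ) : Matrix (Fin d × Fin d) (Fin d × Fin d) ℂ :=
  (2 : ℂ)⁻¹ • (1 + swapOp d)

/-- Hilbert–Schmidt inner product ⟨A,B⟩ = Tr(A* B). -/
noncomputable def hsInner {n : Type*} [Fintype n] (A B : Matrix n n ℂ) : ℂ := (Aᴴ * B).trace

/-- Mixed-unitary channel: a finite convex combination of unitary conjugations. -/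
def IsMixedUnitary {d : ℕ} (Φ : Matrix (Fin d) (Fin d) ℂ → Matrix (Fin d) (Fin d) ℂ) : Prop :=
  ∃ (N : ℕ) (p : Fin N → ℝ) (U : Fin N → Matrix.unitaryGroup (Fin d) ℂ),
    (∀ i, 0 ≤ p i) ∧ (∑ i, p i) = 1 ∧
    ∀ X, Φ X = ∑ i, (p i : ℂ) •
      ((U i : Matrix (Fin d) (Fin d) ℂ) * X * star (U i : Matrix (Fin d) (Fin d) ℂ))

/-- Complete positivity: every extension 1_n ⊗ Φ maps PSD matrices to PSD matrices. -/
def IsCompletelyPositive {d : ℕ}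
    (Φ : Matrix (Fin d) (Fin d) ℂ → Matrix (Fin d) (Fin d) ℂ) : Prop :=
  ∀ (n : ℕ) (M : Matrix (Fin n × Fin d) (Fin n × Fin d) ℂ), M.PosSemidef →
    (Matrix.of fun p q : Fin n × Fin d =>
      Φ (Matrix.of fun i j => M (p.1, i) (q.1, j)) p.2 q.2).PosSemidef

/-- The completely depolarizing channel Ω(X) = (Tr X / d) 1. -/
noncomputable def depol {d : ℕ} (X : Matrix (Fin d) (Fin d) ℂ) : Matrix (Fin d) (Fin d) ℂ :=
  (X.trace / (d : ℂ)) • 1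

/-!
The Choi matrix of `Ψ` is `(d² - 1)(J(Φ) - 1/d) + 1/d`. Since `J(Φ) - 1/d` is Hermitian, it
dominates `-‖J(Φ) - 1/d‖ • 1 ≥ -1/(d(d² - 1)) • 1`, so `J(Ψ)` is positive semidefinite; and a
positive semidefinite Choi matrix gives complete positivity because `(1 ⊗ Ψ)(M)` is a
compression of `M ⊗ J(Ψ)`. Trace preservation and unitality are inherited from `Φ` and `Ω`,
being affine conditions with coefficients `(d² - 1) - (d² - 2) = 1`.
-/

open scoped Matrix.Norms.L2Operator

open scoped MatrixOrder in
theorem Matrix.IsHermitian.posSemidef_add_smul_one_of_norm_le {n : Type*} [Fintype n]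
    [DecidableEq n] {A : Matrix n n ℂ} (hA : A.IsHermitian) {r : ℝ} (hr : ‖A‖ ≤ r) :
    (A + (r : ℂ) • 1).PosSemidef := by
  have hr1 : algebraMap ℝ (Matrix n n ℂ) r = (r : ℂ) • 1 := by
    rw [Algebra.algebraMap_eq_smul_one, ← Complex.coe_smul]
  rw [← nonneg_iff_posSemidef, ← hr1]
  calc 0 ≤ A + algebraMap ℝ _ ‖A‖ :=
        neg_le_iff_add_nonneg.mp hA.isSelfAdjoint.neg_algebraMap_norm_le_self
    _ ≤ A + algebraMap ℝ _ r := add_le_add_right (algebraMap_mono _ hr) A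

theorem Matrix.IsHermitian.posSemidef_smul_add_smul_one {n : Type*} [Fintype n]
    [DecidableEq n] {A : Matrix n n ℂ} (hA : A.IsHermitian) {c e : ℝ} (hc : 0 ≤ c)
    (h : c * ‖A‖ ≤ e) : ((c : ℂ) • A + (e : ℂ) • 1).PosSemidef := by
  refine (hA.smul (Complex.conj_ofReal c)).posSemidef_add_smul_one_of_norm_le ?_
  rwa [norm_smul, Complex.norm_of_nonneg hc]

theorem choi_apply {d : ℕ} (f : Matrix (Fin d) (Fin d) ℂ → Matrix (Fin d) (Fin d) ℂ)
    (i k j l : Fin d) : choi f (i, k) (j, l) = f (single k l 1) i j := by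
  simp only [choi, Matrix.sum_apply, kroneckerMap_apply, single_apply]
  simp [ite_and, Finset.sum_ite_eq']

theorem choi_sub {d : ℕ} (f g : Matrix (Fin d) (Fin d) ℂ → Matrix (Fin d) (Fin d) ℂ) :
    choi (f - g) = choi f - choi g := by
  ext ⟨i, k⟩ ⟨j, l⟩
  simp [choi_apply]

theorem choi_smul {d : ℕ} (c : ℂ) (f : Matrix (Fin d) (Fin d) ℂ → Matrix (Fin d) (Fin d) ℂ) :
    choi (c • f) = c • choi f := by
  ext ⟨i, k⟩ ⟨j, l⟩
  simp [choi_apply]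

theorem choi_depol {d : ℕ} : choi (depol (d := d)) = (d : ℂ)⁻¹ • 1 := by
  ext ⟨i, k⟩ ⟨j, l⟩
  rcases eq_or_ne k l with rfl | hkl
  · simp [choi_apply, depol, one_apply, trace_single_eq_same, div_eq_inv_mul]
  · simp [choi_apply, depol, one_apply, trace_single_eq_of_ne, hkl]

theorem LinearMap.apply_eq_sum_choi {d : ℕ}
    (Ψ : Matrix (Fin d) (Fin d) ℂ →ₗ[ℂ] Matrix (Fin d) (Fin d) ℂ) (X : Matrix (Fin d) (Fin d) ℂ)
    (i j : Fin d) : Ψ X i j = ∑ k, ∑ l, X k l * choi Ψ (i, k) (j, l) := by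
  have hsingle : ∀ k l : Fin d, Matrix.single k l (X k l) = X k l • Matrix.single k l 1 := by
    simp
  conv_lhs => rw [matrix_eq_sum_single X]
  simp only [hsingle, map_sum, map_smul, Matrix.sum_apply, Matrix.smul_apply, smul_eq_mul,
    choi_apply]

theorem isCompletelyPositive_of_posSemidef_choi {d : ℕ}
    (Ψ : Matrix (Fin d) (Fin d) ℂ →ₗ[ℂ] Matrix (Fin d) (Fin d) ℂ) (h : (choi Ψ).PosSemidef) :
    IsCompletelyPositive Ψ := by
  intro n M hM
  let V : Matrix ((Fin n × Fin d) × (Fin d × Fin d)) (Fin n × Fin d) ℂ :=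
    of fun x p => if x.1.1 = p.1 ∧ x.2.1 = p.2 ∧ x.1.2 = x.2.2 then 1 else 0
  have hcompress : (of fun p q : Fin n × Fin d =>
      Ψ (of fun i j => M (p.1, i) (q.1, j)) p.2 q.2) = Vᴴ * (M ⊗ₖ choi Ψ) * V := by
    ext p q
    simp only [LinearMap.apply_eq_sum_choi, V, of_apply, ite_and, Matrix.mul_apply,
      conjTranspose_apply, RCLike.star_def, apply_ite (starRingEnd ℂ), map_one, map_zero,
      kroneckerMap_apply, ite_mul, one_mul, zero_mul, mul_ite, mul_one, mul_zero,
      Fintype.sum_prod_type, Finset.sum_ite_irrel, Finset.sum_ite_eq, Finset.sum_ite_eq',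
      Finset.mem_univ, ↓reduceIte, Finset.sum_const_zero]
    exact Finset.sum_comm
  rw [hcompress]
  exact (hM.kronecker h).conjTranspose_mul_mul_same V

noncomputable def depolLinearMap (d : ℕ) :
    Matrix (Fin d) (Fin d) ℂ →ₗ[ℂ] Matrix (Fin d) (Fin d) ℂ where
  toFun := depol
  map_add' X Y := by simp [depol, add_div, add_smul]
  map_smul' c X := by simp [depol, mul_div_assoc, smul_smul]

theorem trace_depol {d : ℕ} (hd : d ≠ 0) (X : Matrix (Fin d) (Fin d) ℂ) :
    (depol X).trace = X.trace := by
  simp [depol, hd]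

theorem depol_one {d : ℕ} (hd : d ≠ 0) : depol (1 : Matrix (Fin d) (Fin d) ℂ) = 1 := by
  simp [depol, hd]

theorem posSemidef_choi_smul_sub_smul_depol {d : ℕ} (hd : 0 < d)
    (Φ : Matrix (Fin d) (Fin d) ℂ → Matrix (Fin d) (Fin d) ℂ) (hH : (choi Φ).IsHermitian)
    (hnorm : ‖choi Φ - (d : ℂ)⁻¹ • 1‖ ≤ 1 / ((d : ℝ) * ((d : ℝ) ^ 2 - 1))) :
    (choi (((d : ℂ) ^ 2 - 1) • Φ - ((d : ℂ) ^ 2 - 2) • depol)).PosSemidef := by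
  have hchoi : choi (((d : ℂ) ^ 2 - 1) • Φ - ((d : ℂ) ^ 2 - 2) • depol) =
      (((d : ℝ) ^ 2 - 1 : ℝ) : ℂ) • (choi Φ - (d : ℂ)⁻¹ • 1) + (((d : ℝ)⁻¹ : ℝ) : ℂ) • 1 := by
    rw [choi_sub, choi_smul, choi_smul, choi_depol]
    push_cast
    module
  have hd2 : (0 : ℝ) ≤ (d : ℝ) ^ 2 - 1 := sub_nonneg.mpr (one_le_pow₀ (by exact_mod_cast hd))
  have hbound : ((d : ℝ) ^ 2 - 1) * ‖choi Φ - (d : ℂ)⁻¹ • 1‖ ≤ (d : ℝ)⁻¹ := by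
    refine (mul_le_mul_of_nonneg_left hnorm hd2).trans ?_
    rcases hd2.eq_or_lt with h | h
    · rw [← h, zero_mul]
      positivity
    · exact le_of_eq (by field_simp)
  have hA : (choi Φ - (d : ℂ)⁻¹ • 1).IsHermitian :=
    hH.sub (isHermitian_one.smul (IsSelfAdjoint.natCast d).inv₀)
  rw [hchoi]
  exact hA.posSemidef_smul_add_smul_one hd2 hbound

theorem stmt18 (d : ℕ) (hd : 0 < d) (Φ : Matrix (Fin d) (Fin d) ℂ →ₗ[ℂ] Matrix (Fin d) (Fin d) ℂ)
    (hTP : ∀ X, (Φ X).trace = X.trace) (hU : Φ 1 = 1)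
    (hH : (choi ⇑Φ).IsHermitian)
    (hnorm : ‖choi ⇑Φ - (d : ℂ)⁻¹ • (1 : Matrix (Fin d × Fin d) (Fin d × Fin d) ℂ)‖ ≤ 1 / ((d : ℝ) * ((d : ℝ) ^ 2 - 1))) :
    IsCompletelyPositive
        (fun X : Matrix (Fin d) (Fin d) ℂ => ((d : ℂ) ^ 2 - 1) • Φ X - ((d : ℂ) ^ 2 - 2) • depol X) ∧
    (∀ X : Matrix (Fin d) (Fin d) ℂ,
        (((d : ℂ) ^ 2 - 1) • Φ X - ((d : ℂ) ^ 2 - 2) • depol X).trace = X.trace) ∧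
    ((d : ℂ) ^ 2 - 1) • Φ (1 : Matrix (Fin d) (Fin d) ℂ) - ((d : ℂ) ^ 2 - 2) • depol (1 : Matrix (Fin d) (Fin d) ℂ) = 1 := by
  refine ⟨?_, fun X => ?_, ?_⟩
  · let Ψ := ((d : ℂ) ^ 2 - 1) • Φ - ((d : ℂ) ^ 2 - 2) • depolLinearMap d
    have hΨ : ⇑Ψ = ((d : ℂ) ^ 2 - 1) • ⇑Φ - ((d : ℂ) ^ 2 - 2) • depol := rfl
    refine isCompletelyPositive_of_posSemidef_choi Ψ ?_
    rw [hΨ]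
    exact posSemidef_choi_smul_sub_smul_depol hd Φ hH hnorm
  · rw [trace_sub, trace_smul, trace_smul, hTP, trace_depol hd.ne', smul_eq_mul, smul_eq_mul]
    ring
  · rw [hU, depol_one hd.ne', ← sub_smul]
    norm_num
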